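/- Let $a_1, \dots, a_n$ be holomorphic functions on a disc $U \subset \mathbb{C}$ centered at $0$ such that the Wronskian $\operatorname{Wr}(a_1,\dots,a_n)$ has a zero of order exactly $1$ at $z = 0$. Then the vectors $\boldsymbol{a}(0), \boldsymbol{a}'(0), \dots, \boldsymbol{a}^{(n-2)}(0)$ are linearly independent in $\mathbb{C}^n$, where $\boldsymbol{a}(z) = (a_1(z),\dots,a_n(z))$. -/

import Mathlib

/-!
Differentiating the Wronskian column by column (Jacobi's formula), the term obtained from
column `j < n - 1` repeats column `j + 1`, so only the last one survives:
`W' = det (𝐚, 𝐚', …, 𝐚^{(n-2)}, 𝐚^{(n)})`. If `W'(0) ≠ 0`, the columns of this matrix at `0`,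
in particular `𝐚(0), …, 𝐚^{(n-2)}(0)`, are linearly independent.
-/

open Finset

namespace Matrix

theorem det_updateCol_eq_sum_perm {R n : Type*} [CommRing R] [Fintype n] [DecidableEq n]
    (M : Matrix n n R) (j : n) (c : n → R) :
    (M.updateCol j c).det = ∑ σ : Equiv.Perm n,
      ((Equiv.Perm.sign σ : ℤ) : R) * ((∏ i ∈ univ.erase j, M (σ i) i) * c (σ j)) := by
  rw [det_apply']
  refine sum_congr rfl fun σ _ => ?_
  rw [← prod_erase_mul _ _ (mem_univ j)]
  congr 2
  · exact prod_congr rfl fun i hi => by simp [ne_of_mem_erase hi]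
  · simp

theorem hasDerivAt_det {𝕜 𝔸 n : Type*} [NontriviallyNormedField 𝕜] [NormedCommRing 𝔸]
    [NormedAlgebra 𝕜 𝔸] [Fintype n] [DecidableEq n]
    {M : 𝕜 → Matrix n n 𝔸} {M' : Matrix n n 𝔸} {x : 𝕜}
    (hM : ∀ i j, HasDerivAt (fun z => M z i j) (M' i j) x) :
    HasDerivAt (fun z => (M z).det) (∑ j, ((M x).updateCol j (M'.col j)).det) x := by
  simp_rw [det_updateCol_eq_sum_perm, sum_comm (γ := n), ← mul_sum, det_apply']
  exact HasDerivAt.fun_sum fun σ _ =>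
    (HasDerivAt.fun_finsetProd fun i _ => hM (σ i) i).const_mul _

end Matrix

section Wronskian

variable {𝕜 : Type*} [NontriviallyNormedField 𝕜]

noncomputable def wronskianMatrix {n : ℕ} (a : Fin n → 𝕜 → 𝕜) (z : 𝕜) :
    Matrix (Fin n) (Fin n) 𝕜 :=
  Matrix.of fun i j => iteratedDeriv j (a i) z

noncomputable def wronskian {n : ℕ} (a : Fin n → 𝕜 → 𝕜) (z : 𝕜) : 𝕜 :=
  (wronskianMatrix a z).det

theorem hasDerivAt_wronskian {m : ℕ} {a : Fin (m + 1) → 𝕜 → 𝕜} {x : 𝕜}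
    (ha : ∀ i (k : Fin (m + 1)), DifferentiableAt 𝕜 (iteratedDeriv k (a i)) x) :
    HasDerivAt (wronskian a)
      ((wronskianMatrix a x).updateCol (Fin.last m) fun i => iteratedDeriv (m + 1) (a i) x).det
      x := by
  have hjacobi := Matrix.hasDerivAt_det (M := wronskianMatrix a) (x := x)
    (M' := Matrix.of fun i j => iteratedDeriv (j + 1) (a i) x) fun i j => by
      simpa [wronskianMatrix, iteratedDeriv_succ] using (ha i j).hasDerivAt
  refine hjacobi.congr_deriv ?_
  rw [Fin.sum_univ_castSucc, sum_eq_zero, zero_add]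
  · rfl
  · exact fun k _ => Matrix.det_updateCol_eq_zero (i := k.succ) Fin.castSucc_lt_succ.ne'

theorem linearIndependent_iteratedDeriv_of_deriv_wronskian_ne_zero {m : ℕ}
    {a : Fin (m + 1) → 𝕜 → 𝕜} {x : 𝕜}
    (ha : ∀ i (k : Fin (m + 1)), DifferentiableAt 𝕜 (iteratedDeriv k (a i)) x)
    (hW : deriv (wronskian a) x ≠ 0) :
    LinearIndependent 𝕜 fun (k : Fin m) i => iteratedDeriv k (a i) x := by
  rw [(hasDerivAt_wronskian ha).deriv] at hW
  have hcols : (fun (k : Fin m) i => iteratedDeriv k (a i) x) =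
      ((wronskianMatrix a x).updateCol (Fin.last m) fun i => iteratedDeriv (m + 1) (a i) x).col ∘
        Fin.castSucc := by
    ext k i
    simp [wronskianMatrix]
  rw [hcols]
  exact (Matrix.linearIndependent_cols_of_det_ne_zero hW).comp _ (Fin.castSucc_injective m)

end Wronskian

theorem stmt_2_general (n : ℕ) (r : ℝ) (hr : 0 < r)
    (a : Fin n → ℂ → ℂ)
    (ha : ∀ i, AnalyticOnNhd ℂ (a i) (Metric.ball (0 : ℂ) r))
    (W : ℂ → ℂ)
    (hWdef : W = fun z =>
      Matrix.det (Matrix.of fun i j : Fin n => iteratedDeriv (j : ℕ) (a i) z))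
    (hW1 : deriv W 0 ≠ 0) :
    LinearIndependent ℂ
      (fun k : Fin (n - 1) => fun i : Fin n => iteratedDeriv (k : ℕ) (a i) 0) := by
  obtain _ | m := n
  · have : IsEmpty (Fin (0 - 1)) := Fin.isEmpty'
    exact linearIndependent_empty_type
  refine linearIndependent_iteratedDeriv_of_deriv_wronskian_ne_zero (fun i k => ?_)
    (by subst hWdef; exact hW1)
  rw [iteratedDeriv_eq_iterate]
  exact ((ha i).iterated_deriv k 0 (Metric.mem_ball_self hr)).differentiableAt

/-- **Simple zero of the Wronskian forces independence of the first `n-1` derivative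
vectors.**  Let `a 0, …, a (n-1)` be holomorphic on a disc `U` centered at `0` and let
`W z = det (a i ^{(j)}(z))_{i,j}` be their Wronskian.  If `W` has a zero of order
exactly `1` at `z = 0` (i.e. `W 0 = 0` and `W' 0 ≠ 0`), then the vectors
`𝐚(0), 𝐚'(0), …, 𝐚^{(n-2)}(0) ∈ ℂⁿ` are linearly independent, where
`𝐚^{(k)}(0) = (iteratedDeriv k (a i) 0)_i`. -/
theorem stmt_2 (n : ℕ) (hn : 2 ≤ n) (r : ℝ) (hr : 0 < r)
    (a : Fin n → ℂ → ℂ)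
    (ha : ∀ i, AnalyticOnNhd ℂ (a i) (Metric.ball (0 : ℂ) r))
    (W : ℂ → ℂ)
    (hWdef : W = fun z =>
      Matrix.det (Matrix.of fun i j : Fin n => iteratedDeriv (j : ℕ) (a i) z))
    (hW0 : W 0 = 0) (hW1 : deriv W 0 ≠ 0) :
    LinearIndependent ℂ
      (fun k : Fin (n - 1) => fun i : Fin n => iteratedDeriv (k : ℕ) (a i) 0) :=
  stmt_2_general n r hr a ha W hWdef hW1
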